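/- Ahlfors' maximality principle: if ρ : 𝔻 → [0,∞) is a conformal metric density (continuous, positive off a discrete set, C² where positive) with curvature K_ρ(z) = −Δ(log ρ)(z)/ρ(z)² ≤ −1 at every point where ρ(z) > 0, then ρ(z) ≤ 2/(1 − |z|²) for all z ∈ 𝔻. -/

import Mathlib

/-!
Maximum principle. For `r < 1`, the continuous function `ρ(z) (r² - |z|²)` attains its maximum
on the closed disc of radius `r`; if the maximum exceeds `2r`, it is attained at an interior
point `z₁` with `ρ(z₁) > 0`. There `log ρ + log (r² - |z|²)` has a local maximum, so its
Laplacian is `≤ 0`. As `Δ log (r² - |z|²) = -4r² / (r² - |z|²)²` and the curvature bound reads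
`Δ log ρ ≥ ρ²`, this forces `ρ(z₁) (r² - |z₁|²) ≤ 2r` after all. Letting `r → 1` gives the bound.
-/

open Metric Complex

/-- The planar Laplacian ∂²/∂x² + ∂²/∂y² of a function `g : ℂ → ℝ`. -/
noncomputable def planarLaplacian (g : ℂ → ℝ) (z : ℂ) : ℝ :=
  deriv (deriv (fun x : ℝ => g (x + z.im * Complex.I))) z.re +
    deriv (deriv (fun y : ℝ => g (z.re + y * Complex.I))) z.im

open Filter Topology Set

theorem IsLocalMax.deriv_deriv_nonpos {f : ℝ → ℝ} {a : ℝ} (h : IsLocalMax f a)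
    (hc : ContinuousAt f a) : deriv (deriv f) a ≤ 0 := by
  by_contra! hpos
  -- a local maximum with `f'' a > 0` is also a local minimum, so `f` is locally constant
  have hmin : IsLocalMin f a := isLocalMin_of_deriv_deriv_pos hpos h.deriv_eq_zero hc
  have hconst : f =ᶠ[𝓝 a] fun _ => f a := by
    filter_upwards [h, hmin] with x hmax hmin using le_antisymm hmax hmin
  have hderiv : deriv f =ᶠ[𝓝 a] fun _ => 0 := by simpa using hconst.deriv
  simp [hderiv.deriv_eq] at hpos

theorem deriv_deriv_log_const_sub_sq {c t : ℝ} (h : t ^ 2 < c) :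
    deriv (deriv fun s => Real.log (c - s ^ 2)) t = -2 * (c + t ^ 2) / (c - t ^ 2) ^ 2 := by
  have hderiv :
      deriv (fun s => Real.log (c - s ^ 2)) =ᶠ[𝓝 t] fun s => -(2 * s) / (c - s ^ 2) := by
    filter_upwards [((continuous_pow 2).tendsto t).eventually (gt_mem_nhds h)] with s hs
    rw [(((hasDerivAt_pow 2 s).const_sub c).log (sub_pos.2 hs).ne').deriv]
    ring
  have ht : c - t ^ 2 ≠ 0 := (sub_pos.2 h).ne'
  have hnum : HasDerivAt (fun s : ℝ => -(2 * s)) (-2) t := by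
    simpa using ((hasDerivAt_id t).const_mul (2 : ℝ)).fun_neg
  have hden : HasDerivAt (fun s : ℝ => c - s ^ 2) (-(2 * t)) t := by
    simpa using (hasDerivAt_pow 2 t).const_sub c
  rw [hderiv.deriv_eq, (hnum.fun_div hden ht).deriv]
  ring

theorem planarLaplacian_nonpos_of_isLocalMax {g : ℂ → ℝ} {z : ℂ} (h : IsLocalMax g z)
    (hc : ContinuousAt g z) : planarLaplacian g z ≤ 0 := by
  have hline : ∀ (φ : ℝ → ℂ) (t : ℝ), Continuous φ → φ t = z → deriv (deriv (g ∘ φ)) t ≤ 0 := by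
    rintro φ t hφ rfl
    exact (h.comp_continuous hφ.continuousAt).deriv_deriv_nonpos (hc.comp hφ.continuousAt)
  exact add_nonpos (hline (fun x : ℝ => x + z.im * I) z.re (by fun_prop) (re_add_im z))
    (hline (fun y : ℝ => z.re + y * I) z.im (by fun_prop) (re_add_im z))

theorem planarLaplacian_add {f g : ℂ → ℝ} {z : ℂ} (hf : ContDiffAt ℝ 2 f z)
    (hg : ContDiffAt ℝ 2 g z) :
    planarLaplacian (fun w => f w + g w) z = planarLaplacian f z + planarLaplacian g z := by
  have hline : ∀ (φ : ℝ → ℂ) (t : ℝ), ContDiff ℝ 2 φ → φ t = z →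
      deriv (deriv fun s => f (φ s) + g (φ s)) t
        = deriv (deriv fun s => f (φ s)) t + deriv (deriv fun s => g (φ s)) t := by
    rintro φ t hφ rfl
    simpa only [iteratedDeriv_succ, iteratedDeriv_zero, Function.comp_def] using
      iteratedDeriv_fun_add (n := 2) (hf.comp t hφ.contDiffAt) (hg.comp t hφ.contDiffAt)
  have hhoriz : ContDiff ℝ 2 fun x : ℝ => (x : ℂ) + z.im * I :=
    ofRealCLM.contDiff.add contDiff_const
  have hvert : ContDiff ℝ 2 fun y : ℝ => (z.re : ℂ) + y * I :=
    contDiff_const.add (ofRealCLM.contDiff.mul contDiff_const)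
  rw [planarLaplacian, hline _ z.re hhoriz (re_add_im z), hline _ z.im hvert (re_add_im z),
    planarLaplacian, planarLaplacian]
  ring

theorem planarLaplacian_log_sq_sub_sq_norm {r : ℝ} {z : ℂ} (hz : ‖z‖ < r) :
    planarLaplacian (fun w => Real.log (r ^ 2 - ‖w‖ ^ 2)) z
      = -4 * r ^ 2 / (r ^ 2 - ‖z‖ ^ 2) ^ 2 := by
  have hnorm : ∀ w : ℂ, ‖w‖ ^ 2 = w.re ^ 2 + w.im ^ 2 := fun w => by
    rw [Complex.sq_norm, normSq_apply]; ring
  have hzr : z.re ^ 2 + z.im ^ 2 < r ^ 2 := by rw [← hnorm]; gcongr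
  have hx : ∀ x : ℝ, r ^ 2 - (x ^ 2 + z.im ^ 2) = (r ^ 2 - z.im ^ 2) - x ^ 2 := fun x => by ring
  have hy : ∀ y : ℝ, r ^ 2 - (z.re ^ 2 + y ^ 2) = (r ^ 2 - z.re ^ 2) - y ^ 2 := fun y => by ring
  simp only [planarLaplacian, hnorm, add_re, add_im, ofReal_re, ofReal_im, mul_re, mul_im, I_re,
    I_im, mul_zero, mul_one, sub_zero, add_zero, zero_add, hx, hy]
  rw [deriv_deriv_log_const_sub_sq (by linarith), deriv_deriv_log_const_sub_sq (by linarith)]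
  field_simp
  ring

theorem mul_sq_sub_sq_norm_le_of_isLocalMax {ρ : ℂ → ℝ} {z : ℂ} {r : ℝ} (hz : ‖z‖ < r)
    (hρ : 0 < ρ z) (hC2 : ContDiffAt ℝ 2 ρ z)
    (hcurv : ρ z ^ 2 ≤ planarLaplacian (fun w => Real.log (ρ w)) z)
    (hmax : IsLocalMax (fun w => ρ w * (r ^ 2 - ‖w‖ ^ 2)) z) :
    ρ z * (r ^ 2 - ‖z‖ ^ 2) ≤ 2 * r := by
  have hr : 0 < r := (norm_nonneg z).trans_lt hz
  have hs : 0 < r ^ 2 - ‖z‖ ^ 2 := sub_pos.2 (by gcongr)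
  have hweight : ContDiffAt ℝ 2 (fun w : ℂ => r ^ 2 - ‖w‖ ^ 2) z :=
    contDiffAt_const.sub (contDiff_norm_sq ℝ).contDiffAt
  have hlogρ := hC2.log hρ.ne'
  have hlogweight := hweight.log hs.ne'
  have hlogmax : IsLocalMax (fun w => Real.log (ρ w) + Real.log (r ^ 2 - ‖w‖ ^ 2)) z := by
    filter_upwards [hmax, hC2.continuousAt.eventually (lt_mem_nhds hρ),
      hweight.continuousAt.eventually (lt_mem_nhds hs)] with w hw hρw hsw
    rw [← Real.log_mul hρw.ne' hsw.ne', ← Real.log_mul hρ.ne' hs.ne']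
    exact Real.log_le_log (mul_pos hρw hsw) hw
  have hΔ := planarLaplacian_nonpos_of_isLocalMax hlogmax (hlogρ.add hlogweight).continuousAt
  rw [planarLaplacian_add hlogρ hlogweight, planarLaplacian_log_sq_sub_sq_norm hz] at hΔ
  have hsq : (ρ z * (r ^ 2 - ‖z‖ ^ 2)) ^ 2 ≤ (2 * r) ^ 2 := by
    rw [mul_pow, ← le_div_iff₀ (by positivity)]
    calc ρ z ^ 2 ≤ planarLaplacian (fun w => Real.log (ρ w)) z := hcurv
      _ ≤ 4 * r ^ 2 / (r ^ 2 - ‖z‖ ^ 2) ^ 2 := by rw [neg_mul, neg_div] at hΔ; linarith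
      _ = (2 * r) ^ 2 / (r ^ 2 - ‖z‖ ^ 2) ^ 2 := by ring
  exact (pow_le_pow_iff_left₀ (by positivity) (by positivity) two_ne_zero).1 hsq

theorem mul_sq_sub_sq_norm_le_on_closedBall {ρ : ℂ → ℝ} {r : ℝ}
    (hcont : ContinuousOn ρ (closedBall 0 r))
    (hC2 : ∀ z ∈ ball (0 : ℂ) r, 0 < ρ z → ContDiffAt ℝ 2 ρ z)
    (hcurv : ∀ z ∈ ball (0 : ℂ) r, 0 < ρ z →
      ρ z ^ 2 ≤ planarLaplacian (fun w => Real.log (ρ w)) z) :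
    ∀ z ∈ closedBall (0 : ℂ) r, ρ z * (r ^ 2 - ‖z‖ ^ 2) ≤ 2 * r := by
  intro z hz
  obtain ⟨z₁, hz₁, hmax⟩ := (isCompact_closedBall (0 : ℂ) r).exists_isMaxOn ⟨z, hz⟩
    (f := fun w => ρ w * (r ^ 2 - ‖w‖ ^ 2)) (hcont.mul (by fun_prop))
  refine (hmax hz).trans ?_
  by_contra! hbig
  have hz₁r : ‖z₁‖ ≤ r := mem_closedBall_zero_iff.1 hz₁
  have hs₁_nonneg : 0 ≤ r ^ 2 - ‖z₁‖ ^ 2 := sub_nonneg.2 (by gcongr)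
  have hpos : 0 < ρ z₁ * (r ^ 2 - ‖z₁‖ ^ 2) := by linarith [(norm_nonneg z₁).trans hz₁r]
  obtain ⟨hρ₁, hs₁⟩ : 0 < ρ z₁ ∧ 0 < r ^ 2 - ‖z₁‖ ^ 2 :=
    (pos_and_pos_or_neg_and_neg_of_mul_pos hpos).resolve_right fun h => h.2.not_ge hs₁_nonneg
  have hz₁ball : z₁ ∈ ball (0 : ℂ) r := mem_ball_zero_iff.2 (by nlinarith [norm_nonneg z₁])
  have hloc := hmax.isLocalMax
    (mem_of_superset (isOpen_ball.mem_nhds hz₁ball) ball_subset_closedBall)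
  exact hbig.not_ge (mul_sq_sub_sq_norm_le_of_isLocalMax (mem_ball_zero_iff.1 hz₁ball) hρ₁
    (hC2 z₁ hz₁ball hρ₁) (hcurv z₁ hz₁ball hρ₁) hloc)

theorem ahlfors_maximality_general (ρ : ℂ → ℝ)
    (hcont : ContinuousOn ρ (ball (0 : ℂ) 1))
    (hC2 : ∀ z ∈ ball (0 : ℂ) 1, 0 < ρ z → ContDiffAt ℝ 2 ρ z)
    (hcurv : ∀ z ∈ ball (0 : ℂ) 1, 0 < ρ z →
      -planarLaplacian (fun w => Real.log (ρ w)) z / ρ z ^ 2 ≤ -1) :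
    ∀ z ∈ ball (0 : ℂ) 1, ρ z ≤ 2 / (1 - ‖z‖ ^ 2) := by
  intro z hz
  have hz1 : ‖z‖ < 1 := mem_ball_zero_iff.1 hz
  have hcurv_sq : ∀ w ∈ ball (0 : ℂ) 1, 0 < ρ w →
      ρ w ^ 2 ≤ planarLaplacian (fun w => Real.log (ρ w)) w := fun w hw hρ => by
    have := (div_le_iff₀ (by positivity)).1 (hcurv w hw hρ)
    linarith
  have hbound : ∀ r ∈ Ioo ‖z‖ 1, ρ z ≤ 2 * r / (r ^ 2 - ‖z‖ ^ 2) := by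
    rintro r ⟨hzr, hr1⟩
    have hsub : ball (0 : ℂ) r ⊆ ball 0 1 := ball_subset_ball hr1.le
    rw [le_div_iff₀ (sub_pos.2 (by gcongr))]
    exact mul_sq_sub_sq_norm_le_on_closedBall (hcont.mono (closedBall_subset_ball hr1))
      (fun w hw => hC2 w (hsub hw)) (fun w hw => hcurv_sq w (hsub hw)) z
      (mem_closedBall_zero_iff.2 hzr.le)
  have hlim :
      Tendsto (fun r : ℝ => 2 * r / (r ^ 2 - ‖z‖ ^ 2)) (𝓝[<] 1) (𝓝 (2 / (1 - ‖z‖ ^ 2))) := by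
    have hne : (1 : ℝ) ^ 2 - ‖z‖ ^ 2 ≠ 0 := by nlinarith [norm_nonneg z]
    have hcont1 : ContinuousAt (fun r : ℝ => 2 * r / (r ^ 2 - ‖z‖ ^ 2)) 1 := by
      fun_prop (disch := exact hne)
    simpa using hcont1.tendsto.mono_left nhdsWithin_le_nhds
  exact ge_of_tendsto hlim (mem_of_superset (Ioo_mem_nhdsLT hz1) hbound)

theorem ahlfors_maximality (ρ : ℂ → ℝ)
    (hnonneg : ∀ z ∈ ball (0 : ℂ) 1, 0 ≤ ρ z)
    (hcont : ContinuousOn ρ (ball (0 : ℂ) 1))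
    (hdiscrete : ∀ z ∈ ball (0 : ℂ) 1, ρ z = 0 →
      ∃ U ∈ nhds z, ∀ w ∈ U, w ≠ z → ρ w ≠ 0)
    (hC2 : ∀ z ∈ ball (0 : ℂ) 1, 0 < ρ z → ContDiffAt ℝ 2 ρ z)
    (hcurv : ∀ z ∈ ball (0 : ℂ) 1, 0 < ρ z →
      -planarLaplacian (fun w => Real.log (ρ w)) z / ρ z ^ 2 ≤ -1) :
    ∀ z ∈ ball (0 : ℂ) 1, ρ z ≤ 2 / (1 - ‖z‖ ^ 2) :=
  ahlfors_maximality_general ρ hcont hC2 hcurv
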